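/- arXiv:2311.06738 — 5 statements merged into one kernel-verified Lean document; each statement's English description precedes it below -/
import Mathlib

section
/- Let λ > 0, α > 0, β > 0 and let f : ℝ → ℝ be integrable (f ∈ L¹(ℝ)) and bounded. Then the left tempered fractional integrals satisfy the semigroup property: for every x ∈ ℝ, I₊^{α,λ}(I₊^{β,λ} f)(x) = I₊^{α+β,λ} f(x). -/
open MeasureTheory

/-- Left tempered fractional integral
`I₊^{α,λ} f(x) = (1/Γ(α)) ∫_{-∞}^x (x−η)^{α−1} e^{−λ(x−η)} f(η) dη`. -/
noncomputable def leftTemperedIntegral (α lam : ℝ) (f : ℝ → ℝ) (x : ℝ) : ℝ :=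
  (1 / Real.Gamma α) * ∫ η in Set.Iic x, (x - η) ^ (α - 1) * Real.exp (-lam * (x - η)) * f η

/-!
With `κ_γ(t) = t^(γ-1) e^(-λt) / Γ(γ)` for `t > 0` and `0` otherwise,
`I₊^{γ,λ} f = f ⋆ κ_γ`. Since `e^(-λu) e^(-λ(x-u)) = e^(-λx)`, the Beta integral gives
`κ_α ⋆ κ_β = κ_(α+β)`, so the semigroup law is associativity of convolution. That holds at
every point by Fubini, because `f` is bounded and, as `λ > 0`, the kernels are integrable.
-/

open scoped Convolution

section Convolution

variable {G E E' F : Type*} [AddCommGroup G] [MeasurableSpace G] [MeasurableAdd₂ G]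
  [MeasurableNeg G] {μ : Measure G} [SFinite μ] [μ.IsAddLeftInvariant] [μ.IsNegInvariant]
  [NormedAddCommGroup E] [NormedSpace ℝ E] [NormedAddCommGroup E'] [NormedSpace ℝ E']
  [NormedAddCommGroup F] [NormedSpace ℝ F]

theorem convolutionExistsAt_of_bounded (L : E →L[ℝ] E' →L[ℝ] F) {f : G → E} {g : G → E'}
    {C : ℝ} (hf : AEStronglyMeasurable f μ) (hfC : ∀ x, ‖f x‖ ≤ C) (hg : Integrable g μ)
    (x : G) : ConvolutionExistsAt f g x L μ := by
  refine ((hg.comp_sub_left x).norm.const_mul (‖L‖ * C)).mono'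
    (hf.convolution_integrand_snd L hg.aestronglyMeasurable x) (ae_of_all _ fun t => ?_)
  calc ‖L (f t) (g (x - t))‖ ≤ ‖L‖ * ‖f t‖ * ‖g (x - t)‖ := L.le_opNorm₂ _ _
    _ ≤ ‖L‖ * C * ‖g (x - t)‖ := by gcongr; exact hfC t

theorem convolution_assoc_of_bounded {f g k : G → ℝ} {C : ℝ} (hf : AEStronglyMeasurable f μ)
    (hfC : ∀ x, ‖f x‖ ≤ C) (hg : Integrable g μ) (hk : Integrable k μ) (x : G) :
    ((f ⋆[.lsmul ℝ ℝ, μ] g) ⋆[.lsmul ℝ ℝ, μ] k) x =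
      (f ⋆[.lsmul ℝ ℝ, μ] g ⋆[.lsmul ℝ ℝ, μ] k) x :=
  convolution_assoc _ _ _ _ (fun a b c => smul_assoc a b c) hf hg.aestronglyMeasurable
    hk.aestronglyMeasurable (ae_of_all _ (convolutionExistsAt_of_bounded _ hf hfC hg))
    (hg.norm.ae_convolution_exists _ hk.norm)
    (convolutionExistsAt_of_bounded _ hf.norm (fun x => (norm_norm (f x)).trans_le (hfC x))
      (hg.norm.integrable_convolution _ hk.norm) x)

end Convolution

theorem integral_rpow_mul_sub_rpow {s t a : ℝ} (hs : 0 < s) (ht : 0 < t) (ha : 0 < a) :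
    ∫ u in 0..a, u ^ (s - 1) * (a - u) ^ (t - 1) =
      a ^ (s + t - 1) * ProbabilityTheory.beta s t := by
  apply Complex.ofReal_injective
  have hbeta : (ProbabilityTheory.beta s t : ℂ) = Complex.betaIntegral s t := by
    rw [Complex.betaIntegral_eq_Gamma_mul_div _ _ (by simpa) (by simpa), ProbabilityTheory.beta,
      ← Complex.ofReal_add, Complex.Gamma_ofReal, Complex.Gamma_ofReal, Complex.Gamma_ofReal]
    push_cast
    rfl
  rw [Complex.ofReal_mul, hbeta, Complex.ofReal_cpow ha.le]
  push_cast
  rw [← Complex.betaIntegral_scaled _ _ ha, intervalIntegral.integral_of_le ha.le,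
    intervalIntegral.integral_of_le ha.le, ← integral_complex_ofReal]
  refine setIntegral_congr_fun measurableSet_Ioc fun u hu => ?_
  rw [Complex.ofReal_mul, Complex.ofReal_cpow hu.1.le, Complex.ofReal_cpow (sub_nonneg.2 hu.2)]
  push_cast
  rfl

noncomputable def temperedKernel (α lam : ℝ) : ℝ → ℝ :=
  (Set.Ioi 0).indicator fun t => t ^ (α - 1) * Real.exp (-lam * t) / Real.Gamma α

theorem integrable_temperedKernel {α lam : ℝ} (hα : 0 < α) (hlam : 0 < lam) :
    Integrable (temperedKernel α lam) := by
  rw [temperedKernel, integrable_indicator_iff measurableSet_Ioi]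
  have h := integrableOn_rpow_mul_exp_neg_mul_rpow (s := α - 1) (by linarith) one_pos hlam
  simp only [Real.rpow_one] at h
  exact h.div_const _

theorem leftTemperedIntegral_eq_convolution (α lam : ℝ) (f : ℝ → ℝ) :
    leftTemperedIntegral α lam f = f ⋆ temperedKernel α lam := by
  ext x
  have hintegrand : (fun t => f t • temperedKernel α lam (x - t)) = (Set.Iio x).indicator
      fun t => 1 / Real.Gamma α * ((x - t) ^ (α - 1) * Real.exp (-lam * (x - t)) * f t) := by
    ext t
    by_cases ht : t < x
    · rw [Set.indicator_of_mem (Set.mem_Iio.2 ht), temperedKernel,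
        Set.indicator_of_mem (Set.mem_Ioi.2 (sub_pos.2 ht)), smul_eq_mul]
      ring
    · simp [temperedKernel, ht]
  rw [leftTemperedIntegral, convolution_def]
  simp only [ContinuousLinearMap.lsmul_apply]
  rw [hintegrand, integral_indicator measurableSet_Iio, integral_const_mul,
    setIntegral_congr_set Iio_ae_eq_Iic]

theorem temperedKernel_convolution {α β : ℝ} (hα : 0 < α) (hβ : 0 < β) (lam : ℝ) :
    temperedKernel α lam ⋆ temperedKernel β lam = temperedKernel (α + β) lam := by
  ext x
  have hintegrand : (fun u => temperedKernel α lam u • temperedKernel β lam (x - u)) =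
      (Set.Ioo 0 x).indicator fun u => Real.exp (-lam * x) / (Real.Gamma α * Real.Gamma β) *
        (u ^ (α - 1) * (x - u) ^ (β - 1)) := by
    ext u
    by_cases hu : u ∈ Set.Ioo 0 x
    · have hexp : Real.exp (-lam * x) = Real.exp (-lam * u) * Real.exp (-lam * (x - u)) := by
        rw [← Real.exp_add]
        ring_nf
      unfold temperedKernel
      rw [Set.indicator_of_mem hu, Set.indicator_of_mem (Set.mem_Ioi.2 hu.1),
        Set.indicator_of_mem (Set.mem_Ioi.2 (sub_pos.2 hu.2)), smul_eq_mul, hexp]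
      ring
    · rw [Set.indicator_of_notMem hu]
      rw [Set.mem_Ioo, not_and_or, not_lt, not_lt] at hu
      rcases hu with hu | hu
      · simp [temperedKernel, hu.not_gt]
      · simp [temperedKernel, hu]
  rw [convolution_def]
  simp only [ContinuousLinearMap.lsmul_apply]
  rw [hintegrand, integral_indicator measurableSet_Ioo, integral_const_mul]
  rcases lt_or_ge 0 x with hx | hx
  · rw [← integral_Ioc_eq_integral_Ioo, ← intervalIntegral.integral_of_le hx.le,
      integral_rpow_mul_sub_rpow hα hβ hx, temperedKernel,
      Set.indicator_of_mem (Set.mem_Ioi.2 hx), ProbabilityTheory.beta]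
    field_simp
  · simp [temperedKernel, hx.not_gt]

theorem left_tempered_integral_semigroup (lam α β : ℝ) (hlam : 0 < lam) (hα : 0 < α)
    (hβ : 0 < β) (f : ℝ → ℝ) (hf : Integrable f) (hfb : ∃ C, ∀ x, |f x| ≤ C) :
    ∀ x : ℝ, leftTemperedIntegral α lam (leftTemperedIntegral β lam f) x =
      leftTemperedIntegral (α + β) lam f x := by
  intro x
  obtain ⟨C, hC⟩ := hfb
  simp only [leftTemperedIntegral_eq_convolution]
  rw [convolution_assoc_of_bounded hf.aestronglyMeasurable hC (integrable_temperedKernel hβ hlam)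
    (integrable_temperedKernel hα hlam), temperedKernel_convolution hβ hα, add_comm]
end

section
/- Let λ > 0 and α > 0 and let f, g : ℝ → ℝ be integrable and bounded (so that all integrals below converge absolutely). Then the left and right tempered fractional integrals are adjoint to each other in the L² inner product: ∫_{-∞}^{∞} (I₊^{α,λ} f)(x) g(x) dx = ∫_{-∞}^{∞} f(x) (I₋^{α,λ} g)(x) dx. -/
open MeasureTheory

/-- Right tempered fractional integral. -/
noncomputable def rightTemperedIntegral (α lam : ℝ) (f : ℝ → ℝ) (x : ℝ) : ℝ :=
  (1 / Real.Gamma α) * ∫ η in Set.Ici x, (η - x) ^ (α - 1) * Real.exp (-lam * (η - x)) * f η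

/-!
Up to the factor `1/Γ(α)`, both tempered integrals are convolution-type operators with the
integrable kernel `K t = 𝟙[0,∞)(t) t^(α-1) e^(-λt)`:
`I₊ f(x) = ∫ K(x-η) f(η) dη` and `I₋ g(y) = ∫ K(x-y) g(x) dx`.
Since `(x, η) ↦ K(x-η) f(η)` is integrable on the plane and `g` is bounded, Fubini applies to
`g(x) K(x-η) f(η)`, and exchanging the order of integration turns one side into the other.
-/

section KernelAdjoint

variable {G : Type*} [MeasurableSpace G] [AddGroup G] [MeasurableAdd₂ G] [MeasurableNeg G]
  {μ : Measure G} [SFinite μ] [μ.IsAddRightInvariant]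

theorem integral_integral_kernel_mul_eq_integral_mul_integral_kernel {K f g : G → ℝ} {C : ℝ}
    (hK : Integrable K μ) (hf : Integrable f μ) (hg : AEStronglyMeasurable g μ)
    (hgC : ∀ x, ‖g x‖ ≤ C) :
    ∫ x, (∫ y, K (x - y) * f y ∂μ) * g x ∂μ = ∫ y, f y * ∫ x, K (x - y) * g x ∂μ ∂μ := by
  have hKf : Integrable (fun p : G × G => K (p.1 - p.2) * f p.2) (μ.prod μ) := by
    simpa [mul_comm] using hf.convolution_integrand (ContinuousLinearMap.mul ℝ ℝ) hK
  have hgKf : Integrable (fun p : G × G => g p.1 * (K (p.1 - p.2) * f p.2)) (μ.prod μ) :=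
    hKf.bdd_mul hg.comp_fst (Filter.Eventually.of_forall fun p => hgC p.1)
  calc ∫ x, (∫ y, K (x - y) * f y ∂μ) * g x ∂μ
      = ∫ x, ∫ y, g x * (K (x - y) * f y) ∂μ ∂μ := by
        simp only [integral_const_mul, mul_comm]
    _ = ∫ y, ∫ x, g x * (K (x - y) * f y) ∂μ ∂μ := integral_integral_swap hgKf
    _ = ∫ y, f y * ∫ x, K (x - y) * g x ∂μ ∂μ := by
        simp only [← integral_const_mul]
        congr 1 with y
        congr 1 with x
        ring

end KernelAdjoint

theorem setIntegral_Iic_sub_mul_eq_integral_indicator (k f : ℝ → ℝ) (x : ℝ) :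
    ∫ η in Set.Iic x, k (x - η) * f η = ∫ η, (Set.Ici 0).indicator k (x - η) * f η := by
  rw [← integral_indicator measurableSet_Iic]
  congr 1 with η
  by_cases h : η ≤ x <;> simp [Set.indicator, h]

theorem setIntegral_Ici_sub_mul_eq_integral_indicator (k g : ℝ → ℝ) (y : ℝ) :
    ∫ x in Set.Ici y, k (x - y) * g x = ∫ x, (Set.Ici 0).indicator k (x - y) * g x := by
  rw [← integral_indicator measurableSet_Ici]
  congr 1 with x
  by_cases h : y ≤ x <;> simp [Set.indicator, h]

theorem integrable_indicator_Ici_rpow_mul_exp_neg_mul {s b : ℝ} (hs : -1 < s) (hb : 0 < b) :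
    Integrable ((Set.Ici 0).indicator fun t : ℝ => t ^ s * Real.exp (-b * t)) := by
  rw [integrable_indicator_iff measurableSet_Ici, integrableOn_Ici_iff_integrableOn_Ioi]
  simpa using integrableOn_rpow_mul_exp_neg_mul_rpow hs zero_lt_one hb

theorem tempered_integrals_adjoint_general (lam α : ℝ) (hlam : 0 < lam) (hα : 0 < α)
    (f g : ℝ → ℝ) (hf : Integrable f)
    (hg : Integrable g) (hgb : ∃ C, ∀ x, |g x| ≤ C) :
    ∫ x : ℝ, leftTemperedIntegral α lam f x * g x =
      ∫ x : ℝ, f x * rightTemperedIntegral α lam g x := by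
  obtain ⟨C, hC⟩ := hgb
  set k : ℝ → ℝ := fun t => t ^ (α - 1) * Real.exp (-lam * t)
  set K := (Set.Ici 0).indicator k
  have hleft (x : ℝ) :
      leftTemperedIntegral α lam f x = (1 / Real.Gamma α) * ∫ η, K (x - η) * f η :=
    congrArg _ (setIntegral_Iic_sub_mul_eq_integral_indicator k f x)
  have hright (y : ℝ) :
      rightTemperedIntegral α lam g y = (1 / Real.Gamma α) * ∫ x, K (x - y) * g x :=
    congrArg _ (setIntegral_Ici_sub_mul_eq_integral_indicator k g y)
  have hK : Integrable K :=
    integrable_indicator_Ici_rpow_mul_exp_neg_mul (by linarith) hlam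
  simp only [hleft, hright, mul_assoc, mul_left_comm (f _), integral_const_mul]
  rw [integral_integral_kernel_mul_eq_integral_mul_integral_kernel hK hf hg.aestronglyMeasurable
    fun x => (Real.norm_eq_abs _).trans_le (hC x)]

theorem tempered_integrals_adjoint (lam α : ℝ) (hlam : 0 < lam) (hα : 0 < α)
    (f g : ℝ → ℝ) (hf : Integrable f) (hfb : ∃ C, ∀ x, |f x| ≤ C)
    (hg : Integrable g) (hgb : ∃ C, ∀ x, |g x| ≤ C) :
    ∫ x : ℝ, leftTemperedIntegral α lam f x * g x =
      ∫ x : ℝ, f x * rightTemperedIntegral α lam g x :=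
  tempered_integrals_adjoint_general lam α hlam hα f g hf hg hgb
end

section
/- Let λ > 0 and 0 < α < 1, and let f : ℝ → ℝ be continuous with compact support. Then the left tempered fractional derivative inverts the left tempered fractional integral: for every x ∈ ℝ, D₊^{α,λ}(I₊^{α,λ} f)(x) = f(x). -/
open MeasureTheory

/-- Left tempered fractional derivative (`0 < α < 1`):
`D₊^{α,λ} g(x) = (e^{−λx}/Γ(1−α)) (d/dx) ∫_{-∞}^x (x−η)^{−α} e^{λη} g(η) dη`. -/
noncomputable def leftTemperedDerivative (α lam : ℝ) (g : ℝ → ℝ) (x : ℝ) : ℝ :=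
  (Real.exp (-lam * x) / Real.Gamma (1 - α)) *
    deriv (fun y => ∫ η in Set.Iic y, (y - η) ^ (-α) * Real.exp (lam * η) * g η) x

/-!
Multiplying by `e^{λη}` turns the tempered integral of `f` into the Riemann–Liouville integral
of order `α` of `h = e^{λ·} f`. Over the triangle `s < η < y` the kernels `(y - η)^{-α}` and
`(η - s)^{α-1}` integrate in `η` to the Beta value `B(α, 1 - α) = Γ(α) Γ(1 - α)`, independently of
`s` and `y`, so by Fubini the integral differentiated in `D₊^{α,λ}` is `Γ(1 - α) ∫_{-∞}^y h`, whose
derivative is `Γ(1 - α) h(y)`.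
-/

open Set

section Beta

variable {a b : ℝ}

theorem integral_rpow_mul_one_sub_rpow (ha : 0 < a) (hb : 0 < b) :
    ∫ t in (0 : ℝ)..1, t ^ (a - 1) * (1 - t) ^ (b - 1) =
      Real.Gamma a * Real.Gamma b / Real.Gamma (a + b) := by
  have hbeta := Complex.Gamma_mul_Gamma_eq_betaIntegral (s := a) (t := b)
    (by simpa using ha) (by simpa using hb)
  have hreal : Complex.betaIntegral a b =
      ((∫ t in (0 : ℝ)..1, t ^ (a - 1) * (1 - t) ^ (b - 1) : ℝ) : ℂ) := by
    rw [Complex.betaIntegral, ← intervalIntegral.integral_ofReal]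
    refine intervalIntegral.integral_congr fun t ht => ?_
    rw [uIcc_of_le zero_le_one] at ht
    push_cast
    rw [Complex.ofReal_cpow ht.1, Complex.ofReal_cpow (sub_nonneg.2 ht.2)]
    push_cast
    ring
  rw [hreal, ← Complex.ofReal_add, Complex.Gamma_ofReal, Complex.Gamma_ofReal,
    Complex.Gamma_ofReal, ← Complex.ofReal_mul, ← Complex.ofReal_mul] at hbeta
  rw [eq_div_iff (Real.Gamma_pos_of_pos (add_pos ha hb)).ne', mul_comm]
  exact_mod_cast hbeta.symm

theorem integral_sub_rpow_mul_sub_rpow (ha : 0 < a) (hb : 0 < b) {s y : ℝ} (hsy : s < y) :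
    ∫ η in s..y, (η - s) ^ (a - 1) * (y - η) ^ (b - 1) =
      Real.Gamma a * Real.Gamma b / Real.Gamma (a + b) * (y - s) ^ (a + b - 1) := by
  have hc : 0 < y - s := sub_pos.2 hsy
  have hsubst := intervalIntegral.integral_comp_mul_add
    (fun η => (η - s) ^ (a - 1) * (y - η) ^ (b - 1)) (a := 0) (b := 1) hc.ne' s
  simp only [mul_zero, zero_add, mul_one, sub_add_cancel, smul_eq_mul] at hsubst
  have hscale :
      ∫ t in (0 : ℝ)..1, ((y - s) * t + s - s) ^ (a - 1) * (y - ((y - s) * t + s)) ^ (b - 1) =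
        (y - s) ^ (a - 1) * (y - s) ^ (b - 1) *
          ∫ t in (0 : ℝ)..1, t ^ (a - 1) * (1 - t) ^ (b - 1) := by
    rw [← intervalIntegral.integral_const_mul]
    refine intervalIntegral.integral_congr fun t ht => ?_
    rw [uIcc_of_le zero_le_one] at ht
    rw [show (y - s) * t + s - s = (y - s) * t by ring,
      show y - ((y - s) * t + s) = (y - s) * (1 - t) by ring,
      Real.mul_rpow hc.le ht.1, Real.mul_rpow hc.le (sub_nonneg.2 ht.2)]
    ring
  rw [hscale, integral_rpow_mul_one_sub_rpow ha hb] at hsubst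
  rw [eq_inv_mul_iff_mul_eq₀ hc.ne'] at hsubst
  rw [← hsubst, show a + b - 1 = (a - 1) + (b - 1) + 1 by ring,
    Real.rpow_add hc, Real.rpow_add hc, Real.rpow_one]
  ring

theorem integrableOn_sub_rpow_mul_sub_rpow (ha : 0 < a) (hb : 0 < b) (s y : ℝ) :
    IntegrableOn (fun η => (η - s) ^ (a - 1) * (y - η) ^ (b - 1)) (Ioo s y) := by
  rcases le_or_gt y s with hys | hsy
  · simp [Ioo_eq_empty_of_le hys]
  -- Each factor is singular at one endpoint only, so split at the midpoint.
  set m := (s + y) / 2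
  have hsm : s < m := by simp only [m]; linarith
  have hmy : m < y := by simp only [m]; linarith
  have hleft : IntegrableOn (fun η => (η - s) ^ (a - 1)) (Ioc s m) := by
    have := (intervalIntegral.intervalIntegrable_rpow' (r := a - 1) (by linarith)
      (a := 0) (b := m - s)).comp_sub_right s
    simp only [zero_add, sub_add_cancel] at this
    exact (intervalIntegrable_iff_integrableOn_Ioc_of_le hsm.le).1 this
  have hright : IntegrableOn (fun η => (y - η) ^ (b - 1)) (Ioc m y) := by
    have := (intervalIntegral.intervalIntegrable_rpow' (r := b - 1) (by linarith)
      (a := 0) (b := y - m)).comp_sub_left y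
    simp only [sub_zero, sub_sub_cancel] at this
    exact (intervalIntegrable_iff_integrableOn_Ioc_of_le hmy.le).1 this.symm
  have h₁ : IntegrableOn (fun η => (η - s) ^ (a - 1) * (y - η) ^ (b - 1)) (Ioc s m) :=
    hleft.mul_continuousOn_of_subset
      ((continuousOn_const.sub continuousOn_id).rpow_const
        fun η hη => Or.inl (sub_pos.2 (hη.2.trans_lt hmy)).ne')
      measurableSet_Ioc isCompact_Icc Ioc_subset_Icc_self
  have h₂ : IntegrableOn (fun η => (η - s) ^ (a - 1) * (y - η) ^ (b - 1)) (Ioc m y) :=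
    IntegrableOn.continuousOn_mul_of_subset
      ((continuousOn_id.sub continuousOn_const).rpow_const
        fun η hη => Or.inl (sub_pos.2 (hsm.trans_le hη.1)).ne')
      hright isCompact_Icc measurableSet_Ioc Ioc_subset_Icc_self
  have h := h₁.union h₂
  rw [Ioc_union_Ioc_eq_Ioc hsm.le hmy.le] at h
  exact h.mono_set Ioo_subset_Ioc_self

end Beta

theorem integral_Iic_integral_Iic_swap {F : ℝ → ℝ → ℝ} {y : ℝ}
    (hF : Integrable ({p : ℝ × ℝ | p.2 < p.1 ∧ p.1 < y}.indicator fun p => F p.1 p.2)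
      (volume.prod volume)) :
    ∫ η in Iic y, ∫ s in Iic η, F η s = ∫ s in Iic y, ∫ η in Ioo s y, F η s := by
  set Φ := {p : ℝ × ℝ | p.2 < p.1 ∧ p.1 < y}.indicator fun p => F p.1 p.2
  have hΦ : ∀ η s, Φ (η, s) = (Iio y).indicator (fun η => (Iio η).indicator (F η) s) η := by
    intro η s
    by_cases hη : η < y <;> simp [Φ, indicator_apply, hη]
  have houter : ∀ η, ∫ s, Φ (η, s) = (Iio y).indicator (fun η => ∫ s in Iic η, F η s) η := by
    intro η
    by_cases hη : η < y
    · simp only [hΦ, indicator_of_mem (mem_Iio.2 hη)]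
      rw [integral_indicator measurableSet_Iio, setIntegral_congr_set Iio_ae_eq_Iic]
    · simp [hΦ, hη]
  have hinner : ∀ s, ∫ η, Φ (η, s) = (Iio y).indicator (fun s => ∫ η in Ioo s y, F η s) s := by
    intro s
    have hslice : (fun η => Φ (η, s)) = (Ioo s y).indicator (fun η => F η s) := by
      ext η
      by_cases hη : η < y <;> simp [Φ, indicator_apply, hη, and_comm]
    rw [hslice, integral_indicator measurableSet_Ioo]
    by_cases hs : s < y <;> simp [hs]
  calc ∫ η in Iic y, ∫ s in Iic η, F η s = ∫ η, ∫ s, Φ (η, s) := by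
        simp only [houter]
        rw [integral_indicator measurableSet_Iio, setIntegral_congr_set Iio_ae_eq_Iic]
    _ = ∫ s, ∫ η, Φ (η, s) := integral_integral_swap hF
    _ = ∫ s in Iic y, ∫ η in Ioo s y, F η s := by
        simp only [hinner]
        rw [integral_indicator measurableSet_Iio, setIntegral_congr_set Iio_ae_eq_Iic]

section Kernel

variable {α : ℝ}

theorem integrableOn_Ioo_rpow_mul_rpow (hα₀ : 0 < α) (hα₁ : α < 1) (s y : ℝ) :
    IntegrableOn (fun η => (y - η) ^ (-α) * (η - s) ^ (α - 1)) (Ioo s y) := by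
  have := integrableOn_sub_rpow_mul_sub_rpow hα₀ (sub_pos.2 hα₁) s y
  simp only [sub_sub_cancel_left] at this
  simpa only [mul_comm] using this

theorem integral_Ioo_rpow_mul_rpow (hα₀ : 0 < α) (hα₁ : α < 1) {s y : ℝ} (hsy : s < y) :
    ∫ η in Ioo s y, (y - η) ^ (-α) * (η - s) ^ (α - 1) = Real.Gamma α * Real.Gamma (1 - α) := by
  have := integral_sub_rpow_mul_sub_rpow hα₀ (sub_pos.2 hα₁) hsy
  rw [intervalIntegral.integral_of_le hsy.le, integral_Ioc_eq_integral_Ioo] at this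
  simp only [sub_sub_cancel_left, add_sub_cancel, sub_self, Real.rpow_zero, Real.Gamma_one,
    div_one, mul_one] at this
  simpa only [mul_comm] using this

theorem integrable_indicator_rpow_mul_rpow_mul (hα₀ : 0 < α) (hα₁ : α < 1) {h : ℝ → ℝ}
    (hh : Integrable h) (y : ℝ) :
    Integrable ({p : ℝ × ℝ | p.2 < p.1 ∧ p.1 < y}.indicator
      fun p => (y - p.1) ^ (-α) * (p.1 - p.2) ^ (α - 1) * h p.2) (volume.prod volume) := by
  set S := {p : ℝ × ℝ | p.2 < p.1 ∧ p.1 < y}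
  have hS : IsOpen S :=
    (isOpen_lt continuous_snd continuous_fst).and (isOpen_lt continuous_fst continuous_const)
  have hmeas : AEStronglyMeasurable (S.indicator
      fun p => (y - p.1) ^ (-α) * (p.1 - p.2) ^ (α - 1) * h p.2) (volume.prod volume) := by
    refine (aestronglyMeasurable_indicator_iff hS.measurableSet).2
      (AEStronglyMeasurable.mul ?_ hh.aestronglyMeasurable.comp_snd.restrict)
    refine ContinuousOn.aestronglyMeasurable ?_ hS.measurableSet
    exact ((continuous_const.sub continuous_fst).continuousOn.rpow_const
        fun p hp => Or.inl (sub_pos.2 hp.2).ne').mul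
      ((continuous_fst.sub continuous_snd).continuousOn.rpow_const
        fun p hp => Or.inl (sub_pos.2 hp.1).ne')
  have hslice : ∀ s η, S.indicator
      (fun p => (y - p.1) ^ (-α) * (p.1 - p.2) ^ (α - 1) * h p.2) (η, s) =
      (Ioo s y).indicator (fun η => (y - η) ^ (-α) * (η - s) ^ (α - 1) * h s) η := by
    intro s η
    simp [S, indicator_apply, and_comm]
  have hnorm : ∀ s, ∫ η in Ioo s y, ‖(y - η) ^ (-α) * (η - s) ^ (α - 1) * h s‖ =
      (Iio y).indicator (fun s => Real.Gamma α * Real.Gamma (1 - α) * ‖h s‖) s := by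
    intro s
    rcases lt_or_ge s y with hsy | hys
    · rw [indicator_of_mem (mem_Iio.2 hsy), ← integral_Ioo_rpow_mul_rpow hα₀ hα₁ hsy,
        ← integral_mul_const]
      refine setIntegral_congr_fun measurableSet_Ioo fun η hη => ?_
      have h₁ : 0 ≤ (y - η) ^ (-α) := Real.rpow_nonneg (sub_pos.2 hη.2).le _
      have h₂ : 0 ≤ (η - s) ^ (α - 1) := Real.rpow_nonneg (sub_pos.2 hη.1).le _
      rw [norm_mul, Real.norm_of_nonneg (mul_nonneg h₁ h₂)]
    · simp [hys]
  refine (integrable_prod_iff' hmeas).2 ⟨Filter.Eventually.of_forall fun s => ?_, ?_⟩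
  · simp only [hslice]
    rw [integrable_indicator_iff measurableSet_Ioo]
    exact (integrableOn_Ioo_rpow_mul_rpow hα₀ hα₁ s y).mul_const (h s)
  · simp only [hslice, norm_indicator_eq_indicator_norm,
      integral_indicator measurableSet_Ioo, hnorm]
    exact (hh.norm.const_mul _).indicator measurableSet_Iio

theorem integral_Iic_rpow_mul_integral_Iic (hα₀ : 0 < α) (hα₁ : α < 1) {h : ℝ → ℝ}
    (hh : Integrable h) (y : ℝ) :
    ∫ η in Iic y, (y - η) ^ (-α) * ∫ s in Iic η, (η - s) ^ (α - 1) * h s =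
      Real.Gamma α * Real.Gamma (1 - α) * ∫ s in Iic y, h s := by
  calc ∫ η in Iic y, (y - η) ^ (-α) * ∫ s in Iic η, (η - s) ^ (α - 1) * h s
      = ∫ η in Iic y, ∫ s in Iic η, (y - η) ^ (-α) * (η - s) ^ (α - 1) * h s := by
        simp_rw [← integral_const_mul, mul_assoc]
    _ = ∫ s in Iic y, ∫ η in Ioo s y, (y - η) ^ (-α) * (η - s) ^ (α - 1) * h s :=
        integral_Iic_integral_Iic_swap (integrable_indicator_rpow_mul_rpow_mul hα₀ hα₁ hh y)
    _ = ∫ s in Iio y, ∫ η in Ioo s y, (y - η) ^ (-α) * (η - s) ^ (α - 1) * h s :=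
        (setIntegral_congr_set Iio_ae_eq_Iic).symm
    _ = ∫ s in Iio y, Real.Gamma α * Real.Gamma (1 - α) * h s :=
        setIntegral_congr_fun measurableSet_Iio fun s hs => by
          rw [integral_mul_const, integral_Ioo_rpow_mul_rpow hα₀ hα₁ hs]
    _ = Real.Gamma α * Real.Gamma (1 - α) * ∫ s in Iic y, h s := by
        rw [integral_const_mul, setIntegral_congr_set Iio_ae_eq_Iic]

theorem exp_mul_leftTemperedIntegral (lam : ℝ) (f : ℝ → ℝ) (η : ℝ) :
    Real.exp (lam * η) * leftTemperedIntegral α lam f η =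
      (1 / Real.Gamma α) * ∫ s in Iic η, (η - s) ^ (α - 1) * (Real.exp (lam * s) * f s) := by
  rw [leftTemperedIntegral, mul_left_comm, ← integral_const_mul]
  congr 1
  refine integral_congr_ae (Filter.Eventually.of_forall fun s => ?_)
  have hexp : Real.exp (lam * η) * Real.exp (-lam * (η - s)) = Real.exp (lam * s) := by
    rw [← Real.exp_add]; ring_nf
  dsimp only
  rw [← hexp]
  ring

theorem integral_Iic_rpow_mul_exp_mul_leftTemperedIntegral (hα₀ : 0 < α) (hα₁ : α < 1)
    {lam : ℝ} {f : ℝ → ℝ} (hf : Integrable fun s => Real.exp (lam * s) * f s) (y : ℝ) :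
    ∫ η in Iic y, (y - η) ^ (-α) * Real.exp (lam * η) * leftTemperedIntegral α lam f η =
      Real.Gamma (1 - α) * ∫ s in Iic y, Real.exp (lam * s) * f s := by
  simp_rw [mul_assoc, exp_mul_leftTemperedIntegral, mul_left_comm _ (1 / Real.Gamma α),
    integral_const_mul, integral_Iic_rpow_mul_integral_Iic hα₀ hα₁ hf]
  field_simp [(Real.Gamma_pos_of_pos hα₀).ne']

end Kernel

theorem hasDerivAt_integral_Iic {E : Type*} [NormedAddCommGroup E] [NormedSpace ℝ E]
    [CompleteSpace E] {h : ℝ → E} (hh : Continuous h) (hint : Integrable h) (x : ℝ) :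
    HasDerivAt (fun y => ∫ s in Iic y, h s) (h x) x := by
  have hsplit : (fun y => ∫ s in Iic y, h s) =
      fun y => (∫ s in x..y, h s) + ∫ s in Iic x, h s := by
    funext y
    rw [← intervalIntegral.integral_Iic_sub_Iic hint.integrableOn hint.integrableOn,
      sub_add_cancel]
  rw [hsplit]
  exact (hh.integral_hasStrictDerivAt x x).hasDerivAt.add_const _

theorem left_tempered_derivative_inverts_integral_general (lam α : ℝ)
    (hα₀ : 0 < α) (hα₁ : α < 1) (f : ℝ → ℝ) (hf : Continuous f)
    (hsupp : HasCompactSupport f) :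
    ∀ x : ℝ, leftTemperedDerivative α lam (leftTemperedIntegral α lam f) x = f x := by
  intro x
  set h := fun s => Real.exp (lam * s) * f s
  have hh : Continuous h := by fun_prop
  have hint : Integrable h := hh.integrable_of_hasCompactSupport hsupp.mul_left
  rw [leftTemperedDerivative,
    funext (integral_Iic_rpow_mul_exp_mul_leftTemperedIntegral hα₀ hα₁ hint),
    ((hasDerivAt_integral_Iic hh hint x).const_mul _).deriv]
  have hΓ : Real.Gamma (1 - α) ≠ 0 := (Real.Gamma_pos_of_pos (sub_pos.2 hα₁)).ne'
  field_simp
  rw [← mul_assoc, ← Real.exp_add, neg_add_cancel, Real.exp_zero, one_mul]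

theorem left_tempered_derivative_inverts_integral (lam α : ℝ) (hlam : 0 < lam)
    (hα₀ : 0 < α) (hα₁ : α < 1) (f : ℝ → ℝ) (hf : Continuous f)
    (hsupp : HasCompactSupport f) :
    ∀ x : ℝ, leftTemperedDerivative α lam (leftTemperedIntegral α lam f) x = f x :=
  left_tempered_derivative_inverts_integral_general lam α hα₀ hα₁ f hf hsupp
end

section
/- The rational function r(z) = (1 + (5/12)z)/((1 − z/4)(1 − z/3)) is a second-order accurate approximation to the exponential near zero: there exists a constant C > 0 such that for all complex z with |z| ≤ 1, |e^{z} − r(z)| ≤ C|z|³. -/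
/-- The RDP rational approximation to the exponential. -/
noncomputable def rdp (z : ℂ) : ℂ := (1 + (5 / 12) * z) / ((1 - z / 4) * (1 - z / 3))

/-!
`rdp` reproduces the quadratic Taylor polynomial of `exp`: clearing the denominator gives
`1 + z + z²/2 - rdp z = z³ (z - 5) / (24 (1 - z/4)(1 - z/3))`, and on the unit disc the denominator
has modulus at least `(3/4)(2/3) = 1/2`. Together with the Taylor remainder bound
`‖exp z - (1 + z + z²/2)‖ ≤ (2/9) ‖z‖³`, this gives the theorem with `C = 1`.
-/

lemma one_sub_le_norm_one_sub_div {z : ℂ} (hz : ‖z‖ ≤ 1) {c : ℝ} (hc : 0 < c) :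
    1 - 1 / c ≤ ‖1 - z / c‖ := by
  have hzc : ‖z / c‖ ≤ 1 / c := by
    rw [norm_div, Complex.norm_of_nonneg hc.le]
    gcongr
  calc 1 - 1 / c ≤ ‖(1 : ℂ)‖ - ‖z / c‖ := by rw [norm_one]; linarith
    _ ≤ ‖1 - z / c‖ := norm_sub_norm_le _ _

lemma norm_exp_sub_taylor_le {z : ℂ} (hz : ‖z‖ ≤ 1) :
    ‖Complex.exp z - (1 + z + z ^ 2 / 2)‖ ≤ 2 / 9 * ‖z‖ ^ 3 := by
  have h := Complex.exp_bound hz (n := 3) (by norm_num)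
  simp only [Finset.sum_range_succ, Finset.sum_range_zero] at h
  norm_num at h
  linarith

namespace Rdp

lemma half_le_norm_denom {z : ℂ} (hz : ‖z‖ ≤ 1) : 1 / 2 ≤ ‖(1 - z / 4) * (1 - z / 3)‖ := by
  have h4 := one_sub_le_norm_one_sub_div hz (c := 4) (by norm_num)
  have h3 := one_sub_le_norm_one_sub_div hz (c := 3) (by norm_num)
  push_cast at h4 h3
  rw [norm_mul]
  calc (1 : ℝ) / 2 = (1 - 1 / 4) * (1 - 1 / 3) := by norm_num
    _ ≤ ‖1 - z / 4‖ * ‖1 - z / 3‖ := by gcongr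

lemma taylor_sub_rdp {z : ℂ} (hD : (1 - z / 4) * (1 - z / 3) ≠ 0) :
    1 + z + z ^ 2 / 2 - rdp z = z ^ 3 * (z - 5) / (24 * ((1 - z / 4) * (1 - z / 3))) := by
  rw [rdp, sub_div' hD, div_eq_div_iff hD (mul_ne_zero (by norm_num) hD)]
  ring

lemma norm_taylor_sub_rdp_le {z : ℂ} (hz : ‖z‖ ≤ 1) :
    ‖1 + z + z ^ 2 / 2 - rdp z‖ ≤ 1 / 2 * ‖z‖ ^ 3 := by
  have hD := half_le_norm_denom hz
  have hz5 : ‖z - 5‖ ≤ 6 := by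
    calc ‖z - 5‖ ≤ ‖z‖ + ‖(5 : ℂ)‖ := norm_sub_le _ _
      _ ≤ 6 := by norm_num; linarith
  rw [taylor_sub_rdp (norm_pos_iff.mp (by linarith)), norm_div, norm_mul, norm_mul, norm_pow,
    Complex.norm_ofNat, div_le_iff₀ (by linarith)]
  calc ‖z‖ ^ 3 * ‖z - 5‖ ≤ ‖z‖ ^ 3 * 6 := by gcongr
    _ = 1 / 2 * ‖z‖ ^ 3 * (24 * (1 / 2)) := by ring
    _ ≤ 1 / 2 * ‖z‖ ^ 3 * (24 * ‖(1 - z / 4) * (1 - z / 3)‖) := by gcongr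

end Rdp

open Rdp in
theorem rdp_second_order_accurate :
    ∃ C : ℝ, 0 < C ∧ ∀ z : ℂ, ‖z‖ ≤ 1 →
      ‖Complex.exp z - rdp z‖ ≤ C * ‖z‖ ^ 3 := by
  refine ⟨1, one_pos, fun z hz => ?_⟩
  calc ‖Complex.exp z - rdp z‖
      ≤ ‖Complex.exp z - (1 + z + z ^ 2 / 2)‖ + ‖1 + z + z ^ 2 / 2 - rdp z‖ :=
        norm_sub_le_norm_sub_add_norm_sub _ _ _
    _ ≤ 2 / 9 * ‖z‖ ^ 3 + 1 / 2 * ‖z‖ ^ 3 :=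
        add_le_add (norm_exp_sub_taylor_le hz) (norm_taylor_sub_rdp_le hz)
    _ ≤ 1 * ‖z‖ ^ 3 := by linarith [pow_nonneg (norm_nonneg z) 3]
end

section
/- The rational function r(z) = (1 + (5/12)z)/((1 − z/4)(1 − z/3)) is L-acceptable: (i) for every complex number z with Re(z) ≤ 0 one has |r(z)| ≤ 1, and (ii) r(x) → 0 as the real number x → −∞. -/
open Complex Filter

lemma normSq_rdp_den_sub_normSq_rdp_num (z : ℂ) :
    normSq ((1 - z / 4) * (1 - z / 3)) - normSq (1 + 5 / 12 * z) =
      -2 * z.re + z.re ^ 2 / 3 - 7 / 72 * z.re * normSq z + normSq z ^ 2 / 144 := by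
  simp only [normSq_apply, mul_re, mul_im, add_re, add_im, sub_re, sub_im,
    div_re, div_im, one_re, one_im, re_ofNat, im_ofNat]
  ring

theorem norm_rdp_le_one {z : ℂ} (hz : z.re ≤ 0) : ‖rdp z‖ ≤ 1 := by
  have hnormSq : normSq (1 + 5 / 12 * z) ≤ normSq ((1 - z / 4) * (1 - z / 3)) := by
    have hdiff := normSq_rdp_den_sub_normSq_rdp_num z
    nlinarith [mul_nonneg (neg_nonneg.2 hz) (normSq_nonneg z)]
  rw [rdp, norm_div]
  refine div_le_one_of_le₀ ?_ (norm_nonneg _)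
  rw [norm_def, norm_def]
  exact Real.sqrt_le_sqrt hnormSq

lemma rdp_ofReal (x : ℝ) : rdp x = ((1 + 5 / 12 * x) / ((1 - x / 4) * (1 - x / 3)) : ℝ) := by
  push_cast [rdp]
  rfl

lemma norm_rdp_ofReal_le {x : ℝ} (hx : x ≤ 0) : ‖rdp x‖ ≤ 5 / (3 - x) := by
  have hden : 0 < (1 - x / 4) * (1 - x / 3) := by nlinarith
  rw [rdp_ofReal, norm_real, Real.norm_eq_abs, abs_div, abs_of_pos hden,
    div_le_div_iff₀ hden (by linarith)]
  have hnum : |1 + 5 / 12 * x| ≤ 5 / 3 * (1 - x / 4) := abs_le.2 ⟨by linarith, by linarith⟩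
  nlinarith

theorem tendsto_rdp_ofReal_atBot : Tendsto (fun x : ℝ => rdp x) atBot (nhds 0) := by
  have hbound : Tendsto (fun x : ℝ => 5 / (3 - x)) atBot (nhds 0) :=
    tendsto_const_nhds.div_atTop (tendsto_atTop_add_const_left _ 3 tendsto_neg_atBot_atTop)
  exact squeeze_zero_norm' ((eventually_le_atBot 0).mono fun x => norm_rdp_ofReal_le) hbound

theorem rdp_L_acceptable :
    (∀ z : ℂ, z.re ≤ 0 → ‖rdp z‖ ≤ 1) ∧
    Filter.Tendsto (fun x : ℝ => rdp (x : ℂ)) Filter.atBot (nhds 0) :=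
  ⟨fun _ => norm_rdp_le_one, tendsto_rdp_ofReal_atBot⟩
end
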